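/- For the bipartite-graph count recursion: let X-positions of pattern P be partitioned and let T be the set of X-positions with the maximal edge set E_max (set of bottom-level patterns they connect to). Then the sets S ∈ COV(P) satisfying Rule 1 split into two disjoint classes: those with S ∩ T ≠ ∅ (which automatically satisfy the constraints for all patterns in E_max) and those with S ∩ T = ∅ (which must satisfy all constraints using positions outside T); hence |α(P,G)| = (2^{|T|} − 1)·N₁ + N₀ where N₁ counts Rule-1-valid assignments of the remaining positions with constraints in E_max removed and N₀ counts Rule-1-valid sets avoiding T (which is 0 if some pattern in E_max has all its connecting attributes inside T). -/
import Mathlib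


/-- A pattern symbol: `0`, `1`, or `X`. -/
inductive PSym where
  | zero
  | one
  | x
deriving DecidableEq

/-- Coverage of a pattern. -/
def COV {m : ℕ} (P : Fin m → PSym) : Set (Finset (Fin m)) :=
  {S | ∀ k, (P k = PSym.one → k ∈ S) ∧ (P k = PSym.zero → k ∉ S)}

/-- one step of the CountPatterns recursion. Let the bottom-level
constraint patterns be indexed by `ι`, with edges `edge k l` from `X`-positions to
constraints; `α(P,G)` is the set of `S ∈ COV(P)` satisfying Rule 1 (every constraint
`l` has some `k ∈ S` with `edge k l`). Let `T` be a nonempty set of `X`-positions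
whose neighborhoods all equal the common (maximal) neighborhood `Emax`. Then the
Rule-1-valid sets split into the disjoint classes `S ∩ T ≠ ∅` and `S ∩ T = ∅`, and
`|α(P,G)| = (2^{|T|} − 1)·N₁ + N₀`, where `N₁` counts the Rule-1-valid assignments
of the remaining positions with the constraints in `Emax` removed and `N₀` counts
the Rule-1-valid sets avoiding `T`; moreover `N₀ = 0` if some constraint in `Emax`
has all its connecting positions inside `T`. -/
theorem stmt_16 {m : ℕ} (P : Fin m → PSym) {ι : Type*} [Fintype ι]
    (edge : Fin m → ι → Prop) (Emax : Set ι)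
    (T : Finset (Fin m)) (hTne : T.Nonempty)
    (hT : T ⊆ Finset.univ.filter (fun k => P k = PSym.x))
    (hnbhd : ∀ k ∈ T, {l : ι | edge k l} = Emax) :
    (Disjoint
      {S : Finset (Fin m) | S ∈ COV P ∧ (∀ l : ι, ∃ k ∈ S, edge k l) ∧ (S ∩ T).Nonempty}
      {S : Finset (Fin m) | S ∈ COV P ∧ (∀ l : ι, ∃ k ∈ S, edge k l) ∧ S ∩ T = ∅}) ∧
    ({S : Finset (Fin m) | S ∈ COV P ∧ ∀ l : ι, ∃ k ∈ S, edge k l}.ncard =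
      (2 ^ T.card - 1) *
        {S : Finset (Fin m) | S ∈ COV P ∧ S ∩ T = ∅ ∧
          ∀ l : ι, l ∉ Emax → ∃ k ∈ S, edge k l}.ncard +
      {S : Finset (Fin m) | S ∈ COV P ∧ S ∩ T = ∅ ∧
        ∀ l : ι, ∃ k ∈ S, edge k l}.ncard) ∧
    ((∃ l ∈ Emax, ∀ k : Fin m, edge k l → k ∈ T) →
      {S : Finset (Fin m) | S ∈ COV P ∧ S ∩ T = ∅ ∧
        ∀ l : ι, ∃ k ∈ S, edge k l}.ncard = 0) := by

  classical
  have hTx : ∀ k ∈ T, P k = PSym.x := fun k hk => (Finset.mem_filter.mp (hT hk)).2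
  have hedge : ∀ k ∈ T, ∀ l, edge k l ↔ l ∈ Emax := by
    intro k hk l
    have h := hnbhd k hk
    constructor
    · intro h'; rw [← h]; exact h'
    · intro h'; rw [← h] at h'; exact h'
  refine ⟨?_, ?_, ?_⟩
  · rw [Set.disjoint_left]
    rintro S ⟨-, -, hne⟩ ⟨-, -, hemp⟩
    rw [hemp] at hne
    exact Finset.not_nonempty_empty hne
  · -- main counting identity
    have hB : {S : Finset (Fin m) | S ∈ COV P ∧ S ∩ T = ∅ ∧
          ∀ l : ι, l ∉ Emax → ∃ k ∈ S, edge k l}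
        = ↑(Finset.univ.filter (fun S : Finset (Fin m) => S ∈ COV P ∧ S ∩ T = ∅ ∧
          ∀ l : ι, l ∉ Emax → ∃ k ∈ S, edge k l)) := by
      ext S; simp
    have hC : {S : Finset (Fin m) | S ∈ COV P ∧ S ∩ T = ∅ ∧
          ∀ l : ι, ∃ k ∈ S, edge k l}
        = ↑(Finset.univ.filter (fun S : Finset (Fin m) => S ∈ COV P ∧ S ∩ T = ∅ ∧
          ∀ l : ι, ∃ k ∈ S, edge k l)) := by
      ext S; simp
    have hA : {S : Finset (Fin m) | S ∈ COV P ∧ ∀ l : ι, ∃ k ∈ S, edge k l}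
        = ↑(Finset.univ.filter (fun S : Finset (Fin m) => S ∈ COV P ∧
          ∀ l : ι, ∃ k ∈ S, edge k l)) := by
      ext S; simp
    rw [hA, hB, hC, Set.ncard_coe_finset, Set.ncard_coe_finset, Set.ncard_coe_finset]
    set Af := Finset.univ.filter (fun S : Finset (Fin m) => S ∈ COV P ∧
          ∀ l : ι, ∃ k ∈ S, edge k l) with hAf
    set Bf := Finset.univ.filter (fun S : Finset (Fin m) => S ∈ COV P ∧ S ∩ T = ∅ ∧
          ∀ l : ι, l ∉ Emax → ∃ k ∈ S, edge k l) with hBf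
    set Cf := Finset.univ.filter (fun S : Finset (Fin m) => S ∈ COV P ∧ S ∩ T = ∅ ∧
          ∀ l : ι, ∃ k ∈ S, edge k l) with hCf
    set A1 := Af.filter (fun S => (S ∩ T).Nonempty) with hA1
    -- Split Af
    have hsplit : Af = A1 ∪ Cf := by
      ext S
      simp only [hA1, hAf, hCf, Finset.mem_union, Finset.mem_filter, Finset.mem_univ,
        true_and]
      constructor
      · rintro ⟨hcov, hrule⟩
        rcases Finset.eq_empty_or_nonempty (S ∩ T) with he | hn
        · exact Or.inr ⟨hcov, he, hrule⟩
        · exact Or.inl ⟨⟨hcov, hrule⟩, hn⟩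
      · rintro (⟨⟨hcov, hrule⟩, -⟩ | ⟨hcov, -, hrule⟩) <;> exact ⟨hcov, hrule⟩
    have hdisj : Disjoint A1 Cf := by
      rw [Finset.disjoint_left]
      rintro S hS1 hSC
      have h1 := (Finset.mem_filter.mp hS1).2
      have h2 := (Finset.mem_filter.mp hSC).2.2.1
      rw [h2] at h1
      exact Finset.not_nonempty_empty h1
    rw [hsplit, Finset.card_union_of_disjoint hdisj]
    congr 1
    -- now count A1 via bijection with (T.powerset.erase ∅) ×ˢ Bf
    have hbij : A1.card = ((T.powerset.erase ∅) ×ˢ Bf).card := by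
      apply Finset.card_bij' (fun S _ => (S ∩ T, S \ T))
        (fun p _ => p.1 ∪ p.2)
      · -- maps into product
        intro S hS
        simp only [hA1, hAf, Finset.mem_filter, Finset.mem_univ, true_and] at hS
        obtain ⟨⟨hcov, hrule⟩, hne⟩ := hS
        simp only [Finset.mem_product, Finset.mem_erase, Finset.mem_powerset, hBf,
          Finset.mem_filter, Finset.mem_univ, true_and]
        refine ⟨⟨Finset.nonempty_iff_ne_empty.mp hne, Finset.inter_subset_right⟩,
          ?_, ?_, ?_⟩
        · intro k
          refine ⟨fun h1 => ?_, fun h0 => ?_⟩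
          · rw [Finset.mem_sdiff]
            refine ⟨(hcov k).1 h1, fun hkT => ?_⟩
            have := hTx k hkT; rw [h1] at this; exact PSym.noConfusion this
          · rw [Finset.mem_sdiff]
            rintro ⟨hkS, -⟩
            exact (hcov k).2 h0 hkS
        · ext k; simp [Finset.mem_sdiff, Finset.mem_inter]
        · intro l hl
          obtain ⟨k, hkS, hke⟩ := hrule l
          refine ⟨k, Finset.mem_sdiff.mpr ⟨hkS, fun hkT => ?_⟩, hke⟩
          exact hl ((hedge k hkT l).mp hke)
      · -- maps back into A1
        rintro ⟨U, V⟩ hp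
        simp only [Finset.mem_product, Finset.mem_erase, Finset.mem_powerset, hBf,
          Finset.mem_filter, Finset.mem_univ, true_and] at hp
        obtain ⟨⟨hUne, hUT⟩, hVcov, hVT, hVrule⟩ := hp
        obtain ⟨u, hu⟩ := Finset.nonempty_iff_ne_empty.mpr hUne
        have huT : u ∈ T := hUT hu
        simp only [hA1, hAf, Finset.mem_filter, Finset.mem_univ, true_and]
        refine ⟨⟨?_, ?_⟩, ⟨u, Finset.mem_inter.mpr ⟨Finset.mem_union_left _ hu, huT⟩⟩⟩
        · intro k
          refine ⟨fun h1 => Finset.mem_union_right _ ((hVcov k).1 h1), fun h0 => ?_⟩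
          rw [Finset.mem_union]
          rintro (hkU | hkV)
          · have := hTx k (hUT hkU); rw [h0] at this; exact PSym.noConfusion this
          · exact (hVcov k).2 h0 hkV
        · intro l
          by_cases hl : l ∈ Emax
          · exact ⟨u, Finset.mem_union_left _ hu, (hedge u huT l).mpr hl⟩
          · obtain ⟨k, hkV, hke⟩ := hVrule l hl
            exact ⟨k, Finset.mem_union_right _ hkV, hke⟩
      · -- left inverse
        intro S hS
        ext k; simp only [Finset.mem_union, Finset.mem_inter, Finset.mem_sdiff]; tauto
      · -- right inverse
        rintro ⟨U, V⟩ hp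
        simp only [Finset.mem_product, Finset.mem_erase, Finset.mem_powerset, hBf,
          Finset.mem_filter, Finset.mem_univ, true_and] at hp
        obtain ⟨⟨hUne, hUT⟩, hVcov, hVT, hVrule⟩ := hp
        have hVT' : ∀ k ∈ V, k ∉ T := fun k hk hkT =>
          (Finset.notMem_empty k) (hVT ▸ Finset.mem_inter.mpr ⟨hk, hkT⟩)
        have h1 : (U ∪ V) ∩ T = U := by
          ext k
          simp only [Finset.mem_inter, Finset.mem_union]
          constructor
          · rintro ⟨hUV | hV, hT'⟩
            · exact hUV
            · exact absurd hT' (hVT' k hV)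
          · intro hU; exact ⟨Or.inl hU, hUT hU⟩
        have h2 : (U ∪ V) \ T = V := by
          ext k
          simp only [Finset.mem_sdiff, Finset.mem_union]
          constructor
          · rintro ⟨hUV | hV, hT'⟩
            · exact absurd (hUT hUV) hT'
            · exact hV
          · intro hV; exact ⟨Or.inr hV, hVT' k hV⟩
        simp [h1, h2]
    rw [hbij, Finset.card_product, Finset.card_erase_of_mem (Finset.empty_mem_powerset T),
      Finset.card_powerset]
  · rintro ⟨l, hlE, hl⟩
    have : {S : Finset (Fin m) | S ∈ COV P ∧ S ∩ T = ∅ ∧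
        ∀ l : ι, ∃ k ∈ S, edge k l} = ∅ := by
      ext S
      simp only [Set.mem_setOf_eq, Set.mem_empty_iff_false, iff_false, not_and]
      rintro hcov hST hrule
      obtain ⟨k, hkS, hke⟩ := hrule l
      have hkT := hl k hke
      exact (Finset.notMem_empty k) (hST ▸ Finset.mem_inter.mpr ⟨hkS, hkT⟩)
    rw [this, Set.ncard_empty]
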